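/- Let G = ⟨g, t⟩ be a group generated by two elements g, t such that [g,_n t] = 1. Then the normal closure of ⟨g⟩ in G is generated by the set {g^{t^i} : 0 ≤ i ≤ n-1}. -/

import Mathlib

/-!
Put `b = [a, t]`, so that `a^{t^(i+1)} = a^{t^i} b^{t^i}` and `[b,_n t] = [a,_(n+1) t]`.
Induction on `n` then shows: if `[a,_n t] = 1` and `a, a^t, …, a^{t^(n-1)}` lie in a subgroup
`H`, so do `a^{t^n}` and `a^{t⁻¹}`. Hence `H = ⟨g^{t^i} : i < n⟩` is normalized by `t` and
contains `g`; as `G = ⟨g, t⟩`, it is normal, so it is the normal closure of `g`.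
-/

def grpComm {G : Type*} [Group G] (a b : G) : G := a⁻¹ * b⁻¹ * a * b

def engel {G : Type*} [Group G] (a b : G) : ℕ → G
  | 0 => a
  | n + 1 => grpComm (engel a b n) b

section Engel

variable {G : Type*} [Group G]

theorem engel_succ' (a b : G) (n : ℕ) : engel a b (n + 1) = engel (grpComm a b) b n := by
  induction n with
  | zero => rfl
  | succ n ih => exact congrArg (grpComm · b) ih

theorem conj_pow_succ_eq_mul (a t : G) (i : ℕ) :
    (t ^ (i + 1))⁻¹ * a * t ^ (i + 1) =
      ((t ^ i)⁻¹ * a * t ^ i) * ((t ^ i)⁻¹ * grpComm a t * t ^ i) := by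
  simp only [grpComm, pow_succ]
  group

theorem conj_pow_grpComm_mem {H : Subgroup G} {a t : G} {n : ℕ}
    (hH : ∀ i < n + 1, (t ^ i)⁻¹ * a * t ^ i ∈ H) :
    ∀ i < n, (t ^ i)⁻¹ * grpComm a t * t ^ i ∈ H := fun i hi =>
  (H.mul_mem_cancel_left (hH i (by omega))).1 <|
    conj_pow_succ_eq_mul a t i ▸ hH (i + 1) (by omega)

theorem conj_pow_mem_of_engel_eq_one {H : Subgroup G} {a t : G} {n : ℕ}
    (ha : engel a t n = 1) (hH : ∀ i < n, (t ^ i)⁻¹ * a * t ^ i ∈ H) :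
    (t ^ n)⁻¹ * a * t ^ n ∈ H := by
  induction n generalizing a with
  | zero => simp [show a = 1 from ha]
  | succ n ih =>
    rw [conj_pow_succ_eq_mul]
    exact H.mul_mem (hH n (by omega))
      (ih (by rwa [← engel_succ']) (conj_pow_grpComm_mem hH))

theorem conj_inv_mem_of_engel_eq_one {H : Subgroup G} {a t : G} {n : ℕ}
    (ha : engel a t n = 1) (hH : ∀ i < n, (t ^ i)⁻¹ * a * t ^ i ∈ H) :
    t * a * t⁻¹ ∈ H := by
  induction n generalizing a with
  | zero => simp [show a = 1 from ha]
  | succ n ih =>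
    have hb : t * grpComm a t * t⁻¹ ∈ H :=
      ih (by rwa [← engel_succ']) (conj_pow_grpComm_mem hH)
    have ha : a ∈ H := by simpa using hH 0 (by omega)
    have hconj : t * a * t⁻¹ = a * (t * grpComm a t * t⁻¹)⁻¹ := by
      simp only [grpComm]
      group
    rw [hconj]
    exact H.mul_mem ha (H.inv_mem hb)

end Engel

namespace Subgroup

variable {G : Type*} [Group G]

theorem conj_mem_of_mem_closure {S : Set G} {H : Subgroup G} {s : G}
    (hS : ∀ x ∈ S, s * x * s⁻¹ ∈ H) {x : G} (hx : x ∈ closure S) : s * x * s⁻¹ ∈ H :=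
  (closure_le (H.comap (MulAut.conj s).toMonoidHom)).2 hS hx

theorem mem_normalizer_closure_of_conj_mem {S : Set G} {s : G}
    (h₁ : ∀ x ∈ S, s * x * s⁻¹ ∈ closure S) (h₂ : ∀ x ∈ S, s⁻¹ * x * s ∈ closure S) :
    s ∈ normalizer (closure S : Set G) := by
  refine mem_normalizer_iff.2 fun x => ⟨conj_mem_of_mem_closure h₁, fun hx => ?_⟩
  simpa [mul_assoc] using conj_mem_of_mem_closure (s := s⁻¹) (by simpa using h₂) hx

end Subgroup

theorem mem_normalizer_closure_conj_pow_of_engel_eq_one {G : Type*} [Group G] {g t : G}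
    {n : ℕ} (hengel : engel g t n = 1) :
    t ∈ Subgroup.normalizer
      (Subgroup.closure {x : G | ∃ i < n, x = (t ^ i)⁻¹ * g * t ^ i} : Set G) := by
  set S := {x : G | ∃ i < n, x = (t ^ i)⁻¹ * g * t ^ i}
  have hS : ∀ i < n, (t ^ i)⁻¹ * g * t ^ i ∈ Subgroup.closure S :=
    fun i hi => Subgroup.subset_closure ⟨i, hi, rfl⟩
  refine Subgroup.mem_normalizer_closure_of_conj_mem ?_ ?_ <;> rintro _ ⟨i, hi, rfl⟩
  · cases i with
    | zero => simpa using conj_inv_mem_of_engel_eq_one hengel hS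
    | succ i =>
      rw [show t * ((t ^ (i + 1))⁻¹ * g * t ^ (i + 1)) * t⁻¹ = (t ^ i)⁻¹ * g * t ^ i by
        rw [pow_succ]; group]
      exact hS i (by omega)
  · rw [show t⁻¹ * ((t ^ i)⁻¹ * g * t ^ i) * t = (t ^ (i + 1))⁻¹ * g * t ^ (i + 1) by
      rw [pow_succ]; group]
    obtain hi' | rfl := Nat.lt_or_eq_of_le (Nat.succ_le_of_lt hi)
    · exact hS _ hi'
    · exact conj_pow_mem_of_engel_eq_one hengel hS

/-- If `G = ⟨g,t⟩` and `[g,_n t] = 1`, then the normal closure of `⟨g⟩` in `G` is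
generated by `{g^{t^i} : 0 ≤ i ≤ n-1}`. -/
theorem stmt2 {G : Type*} [Group G] (n : ℕ) (g t : G)
    (hgen : Subgroup.closure ({g, t} : Set G) = ⊤)
    (hengel : engel g t n = 1) :
    Subgroup.normalClosure ({g} : Set G) =
      Subgroup.closure {x : G | ∃ i : ℕ, i < n ∧ x = (t ^ i)⁻¹ * g * t ^ i} := by
  set H := Subgroup.closure {x : G | ∃ i : ℕ, i < n ∧ x = (t ^ i)⁻¹ * g * t ^ i}
  have hg : g ∈ H := by
    cases n with
    | zero => exact (show g = 1 from hengel) ▸ H.one_mem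
    | succ n =>
      have h0 : (t ^ 0)⁻¹ * g * t ^ 0 ∈ H := Subgroup.subset_closure ⟨0, n.succ_pos, rfl⟩
      rwa [pow_zero, inv_one, one_mul, mul_one] at h0
  have hnormal : H.Normal := by
    rw [← Subgroup.normalizer_eq_top_iff, eq_top_iff, ← hgen, Subgroup.closure_le]
    exact Set.insert_subset (Subgroup.le_normalizer hg)
      (Set.singleton_subset_iff.2 (mem_normalizer_closure_conj_pow_of_engel_eq_one hengel))
  refine le_antisymm (Subgroup.normalClosure_le_normal (Set.singleton_subset_iff.2 hg)) ?_
  refine (Subgroup.closure_le _).2 ?_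
  rintro _ ⟨i, -, rfl⟩
  simpa using Subgroup.normalClosure_normal.conj_mem g
    (Subgroup.subset_normalClosure (Set.mem_singleton g)) (t ^ i)⁻¹
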